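/- For every t ≥ 0 and every s ∈ ℝ, the limit Υ(t,s) := lim_{n→∞} (1/n)·log Υ_n(t,s) exists in ℝ; moreover, for every t ≥ 0 there exists exactly one s ∈ ℝ such that Υ(t,s) = 0. -/

import Mathlib

open Filter MeasureTheory
open scoped BigOperators ENNReal NNReal Topology

namespace LGQ

noncomputable section

/-- The alphabet `G = {(i,j) : 1 ≤ i ≤ n_j, 1 ≤ j ≤ m}`, encoded as a sigma type:
an element is `⟨j, i⟩` with `j : Fin m` (the `y`-coordinate) and `i : Fin (n j)`. -/
abbrev Alph (m : ℕ) (n : Fin m → ℕ) := Σ j : Fin m, Fin (n j)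

/-- A pair `σ = (σ_L, σ_R)` with `σ_L ∈ G^*` and `σ_R ∈ G_y^*`. -/
abbrev Wd (m : ℕ) (n : Fin m → ℕ) := List (Alph m n) × List (Fin m)

variable {m : ℕ} {n : Fin m → ℕ}

/-- `a_ω := ∏ a_{i_h j_h}` along a word `ω ∈ G^*`. -/
def aP (a : Alph m n → ℝ) (w : List (Alph m n)) : ℝ := (w.map a).prod

/-- `b_τ := ∏ b_{j_h}` along a word `τ ∈ G_y^*`. -/
def bP (b : Fin m → ℝ) (τ : List (Fin m)) : ℝ := (τ.map b).prod

/-- `σ_y := (σ_L)_y ∗ σ_R` : the `y`-word of a pair `σ = σ_L ∗ σ_R`. -/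
def sy (σ : Wd m n) : List (Fin m) := σ.1.map Sigma.fst ++ σ.2

/-- `Ψ_l := {σ = σ_L ∗ σ_R : σ_L ∈ G^l, σ_R ∈ G_y^*, b_{(σ_y)^-} ≥ a_{σ_L} > b_{σ_y}}`. -/
def Psi (a : Alph m n → ℝ) (b : Fin m → ℝ) (l : ℕ) : Set (Wd m n) :=
  {σ | σ.1.length = l ∧ 1 ≤ σ.2.length ∧
    aP a σ.1 ≤ bP b (sy σ).dropLast ∧ bP b (sy σ) < aP a σ.1}

/-- `Ψ^* := ⋃_{l ≥ 1} Ψ_l`. -/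
def PsiStar (a : Alph m n → ℝ) (b : Fin m → ℝ) : Set (Wd m n) :=
  {σ | ∃ l, 1 ≤ l ∧ σ ∈ Psi a b l}

/-- `q_j := Σ_{i=1}^{n_j} p_{ij}`. -/
def qf (p : Alph m n → ℝ) (j : Fin m) : ℝ := ∑ i : Fin (n j), p ⟨j, i⟩

/-- `p_{σ_L} := ∏ p_{i_h j_h}`. -/
def pP (p : Alph m n → ℝ) (w : List (Alph m n)) : ℝ := (w.map p).prod

/-- `q_{σ_R} := ∏ q_{j_h}`. -/
def qP (p : Alph m n → ℝ) (τ : List (Fin m)) : ℝ := (τ.map (qf p)).prod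

/-- `E_r(σ) := p_{σ_L} q_{σ_R} a_{σ_L}^r` (note `E_r(θ) = 1`). -/
def Er (a p : Alph m n → ℝ) (r : ℝ) (σ : Wd m n) : ℝ :=
  pP p σ.1 * qP p σ.2 * aP a σ.1 ^ r

/-- `a̲ := min a_{ij}`. -/
def aLo (a : Alph m n → ℝ) : ℝ := ⨅ g, a g

/-- `ā := max a_{ij}`. -/
def aHi (a : Alph m n → ℝ) : ℝ := ⨆ g, a g

/-- `b̲ := min b_j`. -/
def bLo (b : Fin m → ℝ) : ℝ := ⨅ j, b j

/-- `b̄ := max b_j`. -/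
def bHi (b : Fin m → ℝ) : ℝ := ⨆ j, b j

/-- `p̲ := min p_{ij}`. -/
def pLo (p : Alph m n → ℝ) : ℝ := ⨅ g, p g

/-- `q̲ := min q_j`. -/
def qLo (p : Alph m n → ℝ) : ℝ := ⨅ j, qf p j

/-- `A_1 := ⌊log a̲ / log b̄⌋ + 1`. -/
def A1 (a : Alph m n → ℝ) (b : Fin m → ℝ) : ℤ :=
  ⌊Real.log (aLo a) / Real.log (bHi b)⌋ + 1

/-- `A_2 := ⌊log b̲ / log ā⌋ + 1`. -/
def A2 (a : Alph m n → ℝ) (b : Fin m → ℝ) : ℤ :=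
  ⌊Real.log (bLo b) / Real.log (aHi a)⌋ + 1

/-- `A_3 := max_{(i,j)∈G} a_{ij}/b_j`. -/
def A3 (a : Alph m n → ℝ) (b : Fin m → ℝ) : ℝ := ⨆ g : Alph m n, a g / b g.1

/-- `A_4 := log A_3 / log b̲`. -/
def A4 (a : Alph m n → ℝ) (b : Fin m → ℝ) : ℝ := Real.log (A3 a b) / Real.log (bLo b)

/-- `A_6 := ⌊1/A_4⌋`. -/
def A6 (a : Alph m n → ℝ) (b : Fin m → ℝ) : ℤ := ⌊1 / A4 a b⌋

/-- `η̲_r := p̲ q̲^{A_1} a̲^r`. -/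
def etaLo (a : Alph m n → ℝ) (b : Fin m → ℝ) (p : Alph m n → ℝ) (r : ℝ) : ℝ :=
  pLo p * qLo p ^ A1 a b * aLo a ^ r

/-- `A_{5,r} := ⌊log(q̲² η̲_r)/(r·log ā)⌋`. -/
def A5 (a : Alph m n → ℝ) (b : Fin m → ℝ) (p : Alph m n → ℝ) (r : ℝ) : ℤ :=
  ⌊Real.log (qLo p ^ 2 * etaLo a b p r) / (r * Real.log (aHi a))⌋

/-- `T_{1,r} := ⌊(A_1 + A_{5,r} + 3)/A_4⌋`. -/
def T1 (a : Alph m n → ℝ) (b : Fin m → ℝ) (p : Alph m n → ℝ) (r : ℝ) : ℤ :=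
  ⌊((A1 a b + A5 a b p r + 3 : ℤ) : ℝ) / A4 a b⌋

/-- `ρ = σ^♭`:  for `σ ∈ Ψ_1`, `σ^♭ = θ`; for `σ ∈ Ψ_l` with `l ≥ 2`, `σ^♭` is the unique
`ρ ∈ Ψ_{l-1}` with `ρ_L = (σ_L)^-` and `ρ_y` an initial segment of `σ_y`. -/
def IsFlat (a : Alph m n → ℝ) (b : Fin m → ℝ) (σ ρ : Wd m n) : Prop :=
  (σ.1.length = 1 ∧ ρ = (([], []) : Wd m n)) ∨
  (2 ≤ σ.1.length ∧ ρ ∈ Psi a b (σ.1.length - 1) ∧ ρ.1 = σ.1.dropLast ∧ sy ρ <+: sy σ)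

/-- `Λ_{n,r} := {σ ∈ Ψ^* : E_r(σ^♭) ≥ η̲_r^n > E_r(σ)}`. -/
def Lam (a : Alph m n → ℝ) (b : Fin m → ℝ) (p : Alph m n → ℝ) (r : ℝ) (N : ℕ) :
    Set (Wd m n) :=
  {σ | σ ∈ PsiStar a b ∧ ∃ ρ : Wd m n, IsFlat a b σ ρ ∧
    etaLo a b p r ^ N ≤ Er a p r ρ ∧ Er a p r σ < etaLo a b p r ^ N}

/-- `S_{n,r} := {σ ∈ Ψ^* : η̲_r^{n+1} ≤ E_r(σ) < η̲_r^n}`. -/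
def Snr (a : Alph m n → ℝ) (b : Fin m → ℝ) (p : Alph m n → ℝ) (r : ℝ) (N : ℕ) :
    Set (Wd m n) :=
  {σ | σ ∈ PsiStar a b ∧ etaLo a b p r ^ (N + 1) ≤ Er a p r σ ∧
    Er a p r σ < etaLo a b p r ^ N}

/-- `G_1(σ) := {ω ∈ S_{n,r} : σ_L ⪯ ω_L and σ_y ⪯ ω_y}`. -/
def G1 (a : Alph m n → ℝ) (b : Fin m → ℝ) (p : Alph m n → ℝ) (r : ℝ) (N : ℕ)
    (σ : Wd m n) : Set (Wd m n) :=
  {ω | ω ∈ Snr a b p r N ∧ σ.1 <+: ω.1 ∧ sy σ <+: sy ω}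

/-- `Λ_h(σ) := {ρ ∈ Φ_{l+h} : σ ⪯ ρ}` (componentwise order on pairs). -/
def LamH (a : Alph m n → ℝ) (b : Fin m → ℝ) (σ : Wd m n) (h : ℕ) : Set (Wd m n) :=
  {ρ | ρ ∈ Psi a b (σ.1.length + h) ∧ σ.1 <+: ρ.1 ∧ σ.2 <+: ρ.2}

/-- `I_{k,r}(t) := Σ_{ω∈Φ_k} E_r(ω)^t`. -/
def Ih (a : Alph m n → ℝ) (b : Fin m → ℝ) (p : Alph m n → ℝ) (r : ℝ) (k : ℕ) (t : ℝ) : ℝ :=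
  ∑' ω : Psi a b k, Er a p r ω.1 ^ t

/-- `Υ_n(t,s) := Σ_{σ∈Ψ_n} (p_{σ_L} q_{σ_R})^t a_{σ_L}^s`. -/
def Ups (a : Alph m n → ℝ) (b : Fin m → ℝ) (p : Alph m n → ℝ) (N : ℕ) (t s : ℝ) : ℝ :=
  ∑' σ : Psi a b N, (pP p σ.1.1 * qP p σ.1.2) ^ t * aP a σ.1.1 ^ s

/-- `τ_0 := ((1,j_0),(n_{j_0},j_0))`. -/
def tau0 (j0 : Fin m) (h : 2 ≤ n j0) : List (Alph m n) :=
  [⟨j0, ⟨0, by omega⟩⟩, ⟨j0, ⟨n j0 - 1, by omega⟩⟩]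

/-- `σ̄` is a bar-extension of `σ ∈ Ψ_l`: `σ̄ ∈ Ψ_{l+2}`, `σ̄_L = σ_L ∗ τ_0`, `σ_R ⪯ σ̄_R`. -/
def BarExt (a : Alph m n → ℝ) (b : Fin m → ℝ) (j0 : Fin m) (h : 2 ≤ n j0)
    (σ σb : Wd m n) : Prop :=
  σb ∈ Psi a b (σ.1.length + 2) ∧ σb.1 = σ.1 ++ tau0 j0 h ∧ σ.2 <+: σb.2

/-- cylinder set `[σ] ⊆ Φ_∞ = G^ℕ × G_y^ℕ`. -/
def Cyl (σ : Wd m n) : Set ((ℕ → Alph m n) × (ℕ → Fin m)) :=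
  {x | (∀ i : ℕ, ∀ hi : i < σ.1.length, x.1 i = σ.1.get ⟨i, hi⟩) ∧
       (∀ i : ℕ, ∀ hi : i < σ.2.length, x.2 i = σ.2.get ⟨i, hi⟩)}

/-- the affine map `f_{ij}(x,y) = (a_{ij} x + c_{ij}, b_j y + d_j)`. -/
def fmap (a : Alph m n → ℝ) (b : Fin m → ℝ) (c : Alph m n → ℝ) (d : Fin m → ℝ)
    (g : Alph m n) : ℝ × ℝ → ℝ × ℝ :=
  fun x => (a g * x.1 + c g, b g.1 * x.2 + d g.1)

/-- `A_{L,σ} = c_{i_1j_1} + Σ_{p≥2} (∏_{h<p} a_{i_hj_h}) c_{i_pj_p}`. -/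
def xL (a c : Alph m n → ℝ) : List (Alph m n) → ℝ
  | [] => 0
  | g :: w => c g + a g * xL a c w

/-- `B_{L,σ} = d_{j_1} + Σ_{p≥2} (∏_{h<p} b_{j_h}) d_{j_p}`. -/
def yL (b d : Fin m → ℝ) : List (Fin m) → ℝ
  | [] => 0
  | j :: τ => d j + b j * yL b d τ

/-- the approximate square `F_σ = [A_{L,σ}, A_{L,σ}+a_{σ_L}] × [B_{L,σ}, B_{L,σ}+b_{σ_y}]`. -/
def Fsq (a c : Alph m n → ℝ) (b d : Fin m → ℝ) (σ : Wd m n) : Set (ℝ × ℝ) :=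
  Set.Icc (xL a c σ.1) (xL a c σ.1 + aP a σ.1) ×ˢ
    Set.Icc (yL b d (sy σ)) (yL b d (sy σ) + bP b (sy σ))

/-- the Euclidean distance on `ℝ²`. -/
def eudist (x y : ℝ × ℝ) : ℝ := Real.sqrt ((x.1 - y.1) ^ 2 + (x.2 - y.2) ^ 2)

/-- the horizontal distance `d_h(S,T) = inf{|x-x'| : (x,y)∈S, (x',y')∈T}`. -/
def dH (S T : Set (ℝ × ℝ)) : ℝ := sInf {e | ∃ x ∈ S, ∃ y ∈ T, e = |x.1 - y.1|}

/-- the (Euclidean) diameter of a subset of `ℝ²`. -/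
def euDiam (S : Set (ℝ × ℝ)) : ℝ := sSup {e | ∃ x ∈ S, ∃ y ∈ S, e = eudist x y}

/-- the `N`-th quantization error of order `r`. -/
def qerr (μ : Measure (ℝ × ℝ)) (r : ℝ) (N : ℕ) : ℝ :=
  sInf {e : ℝ | ∃ α : Finset (ℝ × ℝ), ∃ hα : α.Nonempty, α.card ≤ N ∧
    e = (∫ x, α.inf' hα (fun y => eudist x y ^ r) ∂μ) ^ (1 / r)}

/-- the topological support of a measure on `ℝ²`. -/
def suppSet (μ : Measure (ℝ × ℝ)) : Set (ℝ × ℝ) :=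
  {x | ∀ U : Set (ℝ × ℝ), IsOpen U → x ∈ U → μ U ≠ 0}

/-- the dyadic square `[k 2^{-N}, (k+1) 2^{-N}) × [k' 2^{-N}, (k'+1) 2^{-N})`. -/
def Dy (N : ℕ) (k : ℤ × ℤ) : Set (ℝ × ℝ) :=
  Set.Ico ((k.1 : ℝ) * (2 : ℝ) ^ (-(N : ℤ))) (((k.1 : ℝ) + 1) * (2 : ℝ) ^ (-(N : ℤ))) ×ˢ
    Set.Ico ((k.2 : ℝ) * (2 : ℝ) ^ (-(N : ℤ))) (((k.2 : ℝ) + 1) * (2 : ℝ) ^ (-(N : ℤ)))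

/-! For a word `ω ∈ G^n`, the pairs `ω ∗ τ` in `Ψ_n` are exactly those with `τ` in the cut
`{τ : b_τ < x_ω ≤ b_{τ^-}}` of the tree `G_y^*` at level `x_ω = a_ω / b_{ω_y}`. Let `θ` solve
`∑_j q_j^t b_j^θ = 1`. A cut carries total mass `1` for the weights `q_j^t b_j^θ`, and `b_τ` is
within a bounded factor of `x_ω` on it, so `∑_τ q_τ^t ≍ x_ω^{-θ}`. Hence
`Υ_n(t,s) ≍ Φ(s)^n` with `Φ(s) = ∑_{(i,j)} p_{ij}^t a_{ij}^{s-θ} b_j^θ`, so `(1/n) log Υ_n(t,s)`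
tends to `log Φ(s)`; and `Φ` decreases strictly from `∞` to `0`, so it takes the value `1` once. -/

section ListProd

variable {ι : Type*} {f : ι → ℝ}

lemma prod_map_nonneg (hf : ∀ i, 0 ≤ f i) (l : List ι) : 0 ≤ (l.map f).prod :=
  List.prod_nonneg fun _ h => by obtain ⟨i, -, rfl⟩ := List.mem_map.1 h; exact hf i

lemma prod_map_pos (hf : ∀ i, 0 < f i) (l : List ι) : 0 < (l.map f).prod :=
  List.prod_pos fun _ h => by obtain ⟨i, -, rfl⟩ := List.mem_map.1 h; exact hf i

lemma prod_map_rpow (hf : ∀ i, 0 ≤ f i) (l : List ι) (e : ℝ) :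
    (l.map f).prod ^ e = (l.map (f · ^ e)).prod := by
  rw [← Real.list_prod_map_rpow _ (fun _ h => by
    obtain ⟨i, -, rfl⟩ := List.mem_map.1 h; exact hf i), List.map_map]
  rfl

lemma pow_length_le_prod_map {c : ℝ} (hc : 0 ≤ c) (hf : ∀ i, c ≤ f i) (l : List ι) :
    c ^ l.length ≤ (l.map f).prod := by
  simpa using List.prod_map_le_prod_map₀ (fun _ => c) f (fun _ _ => hc) fun i _ => hf i

lemma prod_map_le_pow_length {c : ℝ} (hf0 : ∀ i, 0 ≤ f i) (hf : ∀ i, f i ≤ c) (l : List ι) :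
    (l.map f).prod ≤ c ^ l.length := by
  simpa using List.prod_map_le_prod_map₀ f (fun _ => c) (fun i _ => hf0 i) fun i _ => hf i

end ListProd

lemma tendsto_log_div_of_mem_Icc {u : ℕ → ℝ} {C₁ C₂ Φ : ℝ} (hC₁ : 0 < C₁) (hC₂ : 0 < C₂)
    (hΦ : 0 < Φ) (hu : ∀ N, u N ∈ Set.Icc (C₁ * Φ ^ N) (C₂ * Φ ^ N)) :
    Tendsto (fun N : ℕ => Real.log (u N) / N) atTop (𝓝 (Real.log Φ)) := by
  have hlim : ∀ C : ℝ, Tendsto (fun N : ℕ => Real.log C / N + Real.log Φ) atTop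
      (𝓝 (Real.log Φ)) := fun C => by
    simpa using (tendsto_const_div_atTop_nhds_zero_nat (Real.log C)).add_const (Real.log Φ)
  have hlog : ∀ C : ℝ, 0 < C → ∀ N : ℕ, 0 < N →
      Real.log (C * Φ ^ N) / N = Real.log C / N + Real.log Φ := fun C hC N hN => by
    rw [Real.log_mul hC.ne' (pow_pos hΦ N).ne', Real.log_pow]
    field_simp
  have hu0 : ∀ N, 0 < u N := fun N => (mul_pos hC₁ (pow_pos hΦ N)).trans_le (hu N).1
  refine tendsto_of_tendsto_of_tendsto_of_le_of_le' (hlim C₁) (hlim C₂) ?_ ?_ <;>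
    filter_upwards [eventually_gt_atTop 0] with N hN
  · rw [← hlog C₁ hC₁ N hN]
    exact div_le_div_of_nonneg_right
      (Real.log_le_log (mul_pos hC₁ (pow_pos hΦ N)) (hu N).1) N.cast_nonneg
  · rw [← hlog C₂ hC₂ N hN]
    exact div_le_div_of_nonneg_right (Real.log_le_log (hu0 N) (hu N).2) N.cast_nonneg

lemma existsUnique_sum_mul_rpow_eq_one {ι : Type*} [Fintype ι] [Nonempty ι] {c r : ι → ℝ}
    (hc : ∀ i, 0 < c i) (hr0 : ∀ i, 0 < r i) (hr1 : ∀ i, r i < 1) :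
    ∃! e : ℝ, ∑ i, c i * r i ^ e = 1 := by
  set f : ℝ → ℝ := fun e => ∑ i, c i * r i ^ e
  have hanti : StrictAnti f := fun e e' h =>
    Finset.sum_lt_sum_of_nonempty Finset.univ_nonempty fun i _ =>
      mul_lt_mul_of_pos_left (Real.rpow_lt_rpow_of_exponent_gt (hr0 i) (hr1 i) h) (hc i)
  have hcont : Continuous f :=
    continuous_finsetSum _ fun i _ =>
      continuous_const.mul (Real.continuous_const_rpow (hr0 i).ne')
  have htop : Tendsto f atTop (𝓝 0) := by
    simpa using tendsto_finsetSum Finset.univ fun i _ =>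
      (tendsto_rpow_atTop_of_base_lt_one _ (by linarith [hr0 i]) (hr1 i)).const_mul (c i)
  obtain ⟨i₀⟩ := ‹Nonempty ι›
  have hbot : Tendsto f atBot atTop :=
    tendsto_atTop_mono (fun e => Finset.single_le_sum (f := fun i => c i * r i ^ e)
      (fun i _ => mul_nonneg (hc i).le (Real.rpow_nonneg (hr0 i).le e)) (Finset.mem_univ i₀))
      ((tendsto_rpow_atBot_of_base_lt_one _ (hr0 i₀) (hr1 i₀)).const_mul_atTop (hc i₀))
  obtain ⟨e₁, he₁⟩ := (hbot.eventually_gt_atTop 1).exists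
  obtain ⟨e₂, he₂⟩ := (htop.eventually_lt_const one_pos).exists
  obtain ⟨e, he⟩ := intermediate_value_univ e₂ e₁ hcont ⟨he₂.le, he₁.le⟩
  exact ⟨e, he, fun e' he' => hanti.injective (he'.trans he.symm)⟩

def words (α : Type*) [Fintype α] [DecidableEq α] : ℕ → Finset (List α)
  | 0 => {[]}
  | k + 1 => (Finset.univ ×ˢ words α k).image fun p => p.1 :: p.2

def wordsUpTo (α : Type*) [Fintype α] [DecidableEq α] : ℕ → Finset (List α)
  | 0 => {[]}
  | k + 1 => insert [] ((Finset.univ ×ˢ wordsUpTo α k).image fun p => p.1 :: p.2)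

lemma cons_injective_uncurry {α : Type*} : Function.Injective fun p : α × List α => p.1 :: p.2 :=
  fun _ _ h => Prod.ext (List.cons.inj h).1 (List.cons.inj h).2

section Words

variable {α : Type*} [Fintype α] [DecidableEq α]

lemma mem_words {k : ℕ} {l : List α} : l ∈ words α k ↔ l.length = k := by
  induction k generalizing l with
  | zero => simp [words]
  | succ k ih => cases l <;> simp [words, ih]

lemma mem_wordsUpTo {k : ℕ} {l : List α} : l ∈ wordsUpTo α k ↔ l.length ≤ k := by
  induction k generalizing l with
  | zero => simp [wordsUpTo]
  | succ k ih => cases l <;> simp [wordsUpTo, ih]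

lemma sum_words_succ {M : Type*} [AddCommMonoid M] (f : List α → M) (k : ℕ) :
    ∑ l ∈ words α (k + 1), f l = ∑ g, ∑ l ∈ words α k, f (g :: l) := by
  rw [words, Finset.sum_image cons_injective_uncurry.injOn, Finset.sum_product]

lemma sum_wordsUpTo_succ {M : Type*} [AddCommMonoid M] (f : List α → M) (k : ℕ) :
    ∑ l ∈ wordsUpTo α (k + 1), f l = f [] + ∑ g, ∑ l ∈ wordsUpTo α k, f (g :: l) := by
  rw [wordsUpTo, Finset.sum_insert (by simp), Finset.sum_image cons_injective_uncurry.injOn,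
    Finset.sum_product]

lemma sum_words_prod_map {R : Type*} [CommSemiring R] (f : α → R) (k : ℕ) :
    ∑ l ∈ words α k, (l.map f).prod = (∑ g, f g) ^ k := by
  induction k with
  | zero => simp [words]
  | succ k ih => simp [sum_words_succ, ← Finset.mul_sum, ih, ← Finset.sum_mul, pow_succ']

end Words

section Cuts

def IsCut (b : Fin m → ℝ) (x : ℝ) (τ : List (Fin m)) : Prop :=
  τ ≠ [] ∧ x ≤ bP b τ.dropLast ∧ bP b τ < x

open Classical in
def cutUpTo (b : Fin m → ℝ) (x : ℝ) (K : ℕ) : Finset (List (Fin m)) :=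
  (wordsUpTo (Fin m) K).filter (IsCut b x)

variable {b : Fin m → ℝ} {x B : ℝ}

@[simp] lemma bP_nil : bP b [] = 1 := rfl

@[simp] lemma bP_cons (j : Fin m) (τ : List (Fin m)) : bP b (j :: τ) = b j * bP b τ := by
  simp [bP]

lemma bP_append (τ τ' : List (Fin m)) : bP b (τ ++ τ') = bP b τ * bP b τ' := by
  simp [bP]

lemma bP_pos (hb0 : ∀ j, 0 < b j) (τ : List (Fin m)) : 0 < bP b τ := prod_map_pos hb0 τ

lemma bP_le_pow (hb0 : ∀ j, 0 < b j) (hbB : ∀ j, b j ≤ B) (τ : List (Fin m)) :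
    bP b τ ≤ B ^ τ.length :=
  prod_map_le_pow_length (fun j => (hb0 j).le) hbB τ

lemma bP_le_one (hb0 : ∀ j, 0 < b j) (hb1 : ∀ j, b j ≤ 1) (τ : List (Fin m)) : bP b τ ≤ 1 :=
  (bP_le_pow hb0 hb1 τ).trans (one_pow _).le

lemma not_isCut_of_one_lt (hb0 : ∀ j, 0 < b j) (hb1 : ∀ j, b j ≤ 1) (hx : 1 < x)
    (τ : List (Fin m)) : ¬ IsCut b x τ :=
  fun h => (h.2.1.trans (bP_le_one hb0 hb1 _)).not_gt hx

lemma isCut_cons {j : Fin m} (hbj : 0 < b j) (hx : x ≤ 1) (τ : List (Fin m)) :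
    IsCut b x (j :: τ) ↔ (τ = [] ∧ b j < x) ∨ IsCut b (x / b j) τ := by
  rcases τ with _ | ⟨j', τ⟩
  · simp [IsCut, hx]
  · have hdrop : (j :: j' :: τ).dropLast = j :: (j' :: τ).dropLast := rfl
    simp only [IsCut, hdrop, bP_cons, ne_eq, reduceCtorEq, not_false_eq_true, true_and,
      false_and, false_or, div_le_iff₀ hbj, lt_div_iff₀ hbj]
    constructor <;> rintro ⟨h₁, h₂⟩ <;> constructor <;> linarith

lemma length_le_of_isCut (hb0 : ∀ j, 0 < b j) (hbB : ∀ j, b j ≤ B) (hB1 : B ≤ 1) {K : ℕ}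
    (hK : B ^ K < x) {τ : List (Fin m)} (h : IsCut b x τ) : τ.length ≤ K := by
  by_contra! hlt
  obtain ⟨j, -⟩ := List.exists_mem_of_ne_nil τ h.1
  have hB0 : 0 ≤ B := (hb0 j).le.trans (hbB j)
  have : B ^ τ.dropLast.length ≤ B ^ K :=
    pow_le_pow_of_le_one hB0 hB1 (by rw [List.length_dropLast]; omega)
  linarith [h.2.1, bP_le_pow hb0 hbB τ.dropLast]

lemma mul_le_bP_of_isCut (hb0 : ∀ j, 0 < b j) {L : ℝ} (hLb : ∀ j, L ≤ b j) (hx : 0 ≤ x)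
    {τ : List (Fin m)} (h : IsCut b x τ) : L * x ≤ bP b τ := by
  obtain ⟨τ', j, rfl⟩ := (List.eq_nil_or_concat' τ).resolve_left h.1
  have hx' : x ≤ bP b τ' := by simpa using h.2.1
  calc L * x ≤ b j * bP b τ' := mul_le_mul (hLb j) hx' hx (hb0 j).le
    _ = bP b (τ' ++ [j]) := by simp [bP_append, mul_comm]

end Cuts

section CutSums

variable {b : Fin m → ℝ} {B : ℝ}

/-- The cut at level `x` is a maximal antichain of the tree of words, so it carries the full
mass of any weights `w` with `∑ w_j = 1`. -/
lemma sum_cutUpTo_prod_eq_one (hb0 : ∀ j, 0 < b j) (hbB : ∀ j, b j ≤ B) (hB1 : B ≤ 1)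
    {w : Fin m → ℝ} (hw : ∑ j, w j = 1) :
    ∀ (K : ℕ) {x : ℝ}, 0 < x → x ≤ 1 → B ^ K < x → ∑ τ ∈ cutUpTo b x K, (τ.map w).prod = 1 := by
  classical
  intro K
  induction K with
  | zero => intro x _ hx1 hK; simp at hK; linarith
  | succ K ih =>
    intro x hx0 hx1 hK
    have hb1 : ∀ j, b j ≤ 1 := fun j => (hbB j).trans hB1
    have hletter : ∀ j, (∑ τ ∈ wordsUpTo (Fin m) K,
        if IsCut b x (j :: τ) then ((j :: τ).map w).prod else 0) = w j := by
      intro j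
      simp only [List.map_cons, List.prod_cons]
      rcases lt_or_ge (b j) x with hjx | hjx
      · have hcut : ∀ τ, IsCut b x (j :: τ) ↔ τ = [] := fun τ => by
          rw [isCut_cons (hb0 j) hx1, or_iff_left (not_isCut_of_one_lt hb0 hb1
            ((one_lt_div (hb0 j)).2 hjx) τ)]
          exact and_iff_left hjx
        simp [hcut, mem_wordsUpTo]
      · have hcut : ∀ τ, IsCut b x (j :: τ) ↔ IsCut b (x / b j) τ := fun τ => by
          rw [isCut_cons (hb0 j) hx1, or_iff_right (fun h => hjx.not_gt h.2)]
        have hB0 : 0 < B := (hb0 j).trans_le (hbB j)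
        have hK' : B ^ K < x / b j := calc
          B ^ K < x / B := by rwa [lt_div_iff₀ hB0, ← pow_succ]
          _ ≤ x / b j := div_le_div_of_nonneg_left hx0.le (hb0 j) (hbB j)
        simp only [hcut, ← Finset.sum_filter, ← Finset.mul_sum]
        rw [← cutUpTo, ih (div_pos hx0 (hb0 j)) ((div_le_one (hb0 j)).2 hjx) hK', mul_one]
    rw [cutUpTo, Finset.sum_filter, sum_wordsUpTo_succ, if_neg fun h => h.1 rfl, zero_add]
    simp only [hletter, hw]

lemma min_rpow_le_rpow_of_mem_Icc {L y : ℝ} (hL : 0 < L) (hy : y ∈ Set.Icc L 1) (e : ℝ) :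
    min (L ^ e) 1 ≤ y ^ e := by
  rcases le_total 0 e with he | he
  · exact (min_le_left _ _).trans (Real.rpow_le_rpow hL.le hy.1 he)
  · calc min (L ^ e) 1 ≤ 1 ^ e := by rw [Real.one_rpow]; exact min_le_right _ _
      _ ≤ y ^ e := Real.rpow_le_rpow_of_nonpos (hL.trans_le hy.1) hy.2 he

lemma rpow_le_max_rpow_of_mem_Icc {L y : ℝ} (hL : 0 < L) (hy : y ∈ Set.Icc L 1) (e : ℝ) :
    y ^ e ≤ max (L ^ e) 1 := by
  rcases le_total 0 e with he | he
  · calc y ^ e ≤ 1 ^ e := Real.rpow_le_rpow (hL.le.trans hy.1) hy.2 he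
      _ ≤ max (L ^ e) 1 := by rw [Real.one_rpow]; exact le_max_right _ _
  · exact (Real.rpow_le_rpow_of_nonpos hL hy.1 he).trans (le_max_left _ _)

/-- Write `u_τ = (u_τ b_τ^θ) b_τ^{-θ}`: the first factors have total mass `1` on the cut, and
`L x ≤ b_τ < x` there. -/
lemma sum_cutUpTo_prod_mem_Icc (hb0 : ∀ j, 0 < b j) (hbB : ∀ j, b j ≤ B) (hB1 : B ≤ 1)
    {L : ℝ} (hL : 0 < L) (hLb : ∀ j, L ≤ b j) {u : Fin m → ℝ} (hu : ∀ j, 0 ≤ u j) {θ : ℝ}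
    (hθ : ∑ j, u j * b j ^ θ = 1) {K : ℕ} {x : ℝ} (hx0 : 0 < x) (hx1 : x ≤ 1) (hK : B ^ K < x) :
    ∑ τ ∈ cutUpTo b x K, (τ.map u).prod ∈
      Set.Icc (min (L ^ (-θ)) 1 * x ^ (-θ)) (max (L ^ (-θ)) 1 * x ^ (-θ)) := by
  classical
  set w : Fin m → ℝ := fun j => u j * b j ^ θ
  have hw0 : ∀ τ : List (Fin m), 0 ≤ (τ.map w).prod :=
    prod_map_nonneg fun j => mul_nonneg (hu j) (Real.rpow_nonneg (hb0 j).le θ)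
  have hsplit : ∀ τ : List (Fin m),
      (τ.map u).prod = (τ.map w).prod * ((bP b τ / x) ^ (-θ) * x ^ (-θ)) := fun τ => by
    rw [← Real.mul_rpow (div_nonneg (bP_pos hb0 τ).le hx0.le) hx0.le, div_mul_cancel₀ _ hx0.ne']
    have hbθ : (τ.map fun j => b j ^ θ).prod = bP b τ ^ θ :=
      (prod_map_rpow (fun j => (hb0 j).le) τ θ).symm
    rw [List.prod_map_mul, hbθ, mul_assoc, ← Real.rpow_add (bP_pos hb0 τ), add_neg_cancel,
      Real.rpow_zero, mul_one]
  have hratio : ∀ τ ∈ cutUpTo b x K, bP b τ / x ∈ Set.Icc L 1 := fun τ hτ => by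
    have hcut := (Finset.mem_filter.1 hτ).2
    exact ⟨(le_div_iff₀ hx0).2 (mul_le_bP_of_isCut hb0 hLb hx0.le hcut),
      (div_le_one hx0).2 hcut.2.2.le⟩
  have hmass := sum_cutUpTo_prod_eq_one hb0 hbB hB1 hθ K hx0 hx1 hK
  constructor
  · calc min (L ^ (-θ)) 1 * x ^ (-θ)
          = ∑ τ ∈ cutUpTo b x K, (τ.map w).prod * (min (L ^ (-θ)) 1 * x ^ (-θ)) := by
          rw [← Finset.sum_mul, hmass, one_mul]
      _ ≤ _ := Finset.sum_le_sum fun τ hτ => by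
          rw [hsplit]
          exact mul_le_mul_of_nonneg_left (mul_le_mul_of_nonneg_right
            (min_rpow_le_rpow_of_mem_Icc hL (hratio τ hτ) _) (Real.rpow_nonneg hx0.le _)) (hw0 τ)
  · calc _ ≤ ∑ τ ∈ cutUpTo b x K, (τ.map w).prod * (max (L ^ (-θ)) 1 * x ^ (-θ)) :=
          Finset.sum_le_sum fun τ hτ => by
          rw [hsplit]
          exact mul_le_mul_of_nonneg_left (mul_le_mul_of_nonneg_right
            (rpow_le_max_rpow_of_mem_Icc hL (hratio τ hτ) _) (Real.rpow_nonneg hx0.le _)) (hw0 τ)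
      _ = _ := by rw [← Finset.sum_mul, hmass, one_mul]

end CutSums

section Decomposition

variable {a p : Alph m n → ℝ} {b : Fin m → ℝ}

def abRatio (a : Alph m n → ℝ) (b : Fin m → ℝ) (ω : List (Alph m n)) : ℝ :=
  (ω.map fun g => a g / b g.1).prod

lemma aP_eq_bP_mul_abRatio (hb0 : ∀ j, 0 < b j) (ω : List (Alph m n)) :
    aP a ω = bP b (ω.map Sigma.fst) * abRatio a b ω := by
  rw [abRatio, bP, List.map_map, ← List.prod_map_mul]
  exact congrArg List.prod
    (List.map_congr_left fun g _ => (mul_div_cancel₀ _ (hb0 g.1).ne').symm)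

lemma mem_Psi_iff (hb0 : ∀ j, 0 < b j) {N : ℕ} {ω : List (Alph m n)} {τ : List (Fin m)} :
    ((ω, τ) : Wd m n) ∈ Psi a b N ↔ ω.length = N ∧ IsCut b (abRatio a b ω) τ := by
  have hβ := bP_pos hb0 (ω.map Sigma.fst)
  rcases eq_or_ne τ [] with rfl | hτ
  · simp [Psi, IsCut]
  · simp only [Psi, IsCut, sy, Set.mem_ofPred_eq, List.dropLast_append_of_ne_nil hτ, bP_append,
      aP_eq_bP_mul_abRatio hb0 ω, mul_le_mul_iff_of_pos_left hβ, mul_lt_mul_iff_of_pos_left hβ,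
      Nat.one_le_iff_ne_zero, ne_eq, List.length_eq_zero_iff]

lemma qf_nonneg (hp : ∀ g, 0 ≤ p g) (j : Fin m) : 0 ≤ qf p j :=
  Finset.sum_nonneg fun i _ => hp ⟨j, i⟩

lemma Ups_eq_sum_words (hb0 : ∀ j, 0 < b j) (hp : ∀ g, 0 ≤ p g) (N K : ℕ)
    (hK : ∀ ω τ, ω.length = N → IsCut b (abRatio a b ω) τ → τ.length ≤ K) (t s : ℝ) :
    Ups a b p N t s = ∑ ω ∈ words (Alph m n) N,
      pP p ω ^ t * aP a ω ^ s * ∑ τ ∈ cutUpTo b (abRatio a b ω) K, (τ.map (qf p · ^ t)).prod := by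
  classical
  have hPsi : Psi a b N =
      ↑((words (Alph m n) N ×ˢ wordsUpTo (Fin m) K).filter (· ∈ Psi a b N)) := by
    ext ⟨ω, τ⟩
    simp only [Finset.coe_filter, Finset.mem_product, mem_words, mem_wordsUpTo, Set.mem_ofPred_eq]
    constructor
    · intro h
      obtain ⟨hω, hτ⟩ := (mem_Psi_iff hb0).1 h
      exact ⟨⟨hω, hK ω τ hω hτ⟩, h⟩
    · exact fun h => h.2
  rw [Ups, hPsi,
    Finset.tsum_subtype' _ fun σ : Wd m n => (pP p σ.1 * qP p σ.2) ^ t * aP a σ.1 ^ s,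
    Finset.sum_filter, Finset.sum_product]
  refine Finset.sum_congr rfl fun ω hω => ?_
  rw [cutUpTo, Finset.sum_filter, Finset.mul_sum]
  refine Finset.sum_congr rfl fun τ _ => ?_
  simp only [mem_Psi_iff hb0, mem_words.1 hω, true_and]
  split_ifs
  · rw [pP, qP, Real.mul_rpow (prod_map_nonneg hp ω) (prod_map_nonneg (qf_nonneg hp) τ),
      prod_map_rpow (qf_nonneg hp)]
    ring
  · rw [mul_zero]

end Decomposition

section Growth

variable {a p : Alph m n → ℝ} {b : Fin m → ℝ}

lemma pP_rpow_mul_aP_rpow_mul_abRatio_rpow (ha0 : ∀ g, 0 < a g) (hb0 : ∀ j, 0 < b j)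
    (hp : ∀ g, 0 ≤ p g) (ω : List (Alph m n)) (t s θ : ℝ) :
    pP p ω ^ t * aP a ω ^ s * abRatio a b ω ^ (-θ) =
      (ω.map fun g => p g ^ t * a g ^ (-θ) * b g.1 ^ θ * a g ^ s).prod := by
  rw [pP, aP, abRatio, prod_map_rpow hp, prod_map_rpow fun g => (ha0 g).le,
    prod_map_rpow fun g => (div_pos (ha0 g) (hb0 g.1)).le, ← List.prod_map_mul,
    ← List.prod_map_mul]
  refine congrArg List.prod (List.map_congr_left fun g _ => ?_)
  rw [Real.div_rpow (ha0 g).le (hb0 g.1).le, Real.rpow_neg (hb0 g.1).le θ, div_inv_eq_mul]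
  ring

lemma exists_Ups_mem_Icc [Nonempty (Alph m n)] (ha0 : ∀ g, 0 < a g) (hab : ∀ g, a g ≤ b g.1)
    (hb0 : ∀ j, 0 < b j) (hb1 : ∀ j, b j < 1) (hp : ∀ g, 0 ≤ p g) {t θ : ℝ}
    (hθ : ∑ j, qf p j ^ t * b j ^ θ = 1) :
    ∃ C₁ C₂ : ℝ, 0 < C₁ ∧ 0 < C₂ ∧ ∀ (N : ℕ) (s : ℝ), Ups a b p N t s ∈
      Set.Icc (C₁ * (∑ g, p g ^ t * a g ^ (-θ) * b g.1 ^ θ * a g ^ s) ^ N)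
        (C₂ * (∑ g, p g ^ t * a g ^ (-θ) * b g.1 ^ θ * a g ^ s) ^ N) := by
  have : Nonempty (Fin m) := Nonempty.map Sigma.fst ‹Nonempty (Alph m n)›
  obtain ⟨j₁, hj₁⟩ := Finite.exists_max b
  obtain ⟨j₂, hj₂⟩ := Finite.exists_min b
  obtain ⟨g₀, hg₀⟩ := Finite.exists_min a
  refine ⟨min (b j₂ ^ (-θ)) 1, max (b j₂ ^ (-θ)) 1,
    lt_min (Real.rpow_pos_of_pos (hb0 j₂) _) one_pos, lt_max_of_lt_right one_pos, fun N s => ?_⟩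
  obtain ⟨K, hK⟩ := exists_pow_lt_of_lt_one (pow_pos (ha0 g₀) N) (hb1 j₁)
  have hratio : ∀ ω : List (Alph m n), ω.length = N →
      0 < abRatio a b ω ∧ abRatio a b ω ≤ 1 ∧ b j₁ ^ K < abRatio a b ω := by
    intro ω hω
    have hpos : ∀ g, 0 < a g / b g.1 := fun g => div_pos (ha0 g) (hb0 g.1)
    refine ⟨prod_map_pos hpos ω, ?_, ?_⟩
    · simpa [abRatio] using prod_map_le_pow_length (fun g => (hpos g).le)
        (fun g => (div_le_one (hb0 g.1)).2 (hab g)) ω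
    · refine hK.trans_le (hω ▸ pow_length_le_prod_map (ha0 g₀).le (fun g => ?_) ω)
      exact (hg₀ g).trans (le_div_self (ha0 g).le (hb0 g.1) (hb1 g.1).le)
  rw [Ups_eq_sum_words hb0 hp N K (fun ω τ hω => length_le_of_isCut hb0 hj₁ (hb1 j₁).le
    (hratio ω hω).2.2), ← sum_words_prod_map, Finset.mul_sum, Finset.mul_sum]
  have hcut : ∀ ω ∈ words (Alph m n) N, _ := fun ω hω =>
    have h := hratio ω (mem_words.1 hω)
    sum_cutUpTo_prod_mem_Icc hb0 hj₁ (hb1 j₁).le (hb0 j₂) hj₂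
      (fun j => Real.rpow_nonneg (qf_nonneg hp j) t) hθ h.1 h.2.1 h.2.2
  have hF : ∀ ω : List (Alph m n), 0 ≤ pP p ω ^ t * aP a ω ^ s := fun ω =>
    mul_nonneg (Real.rpow_nonneg (prod_map_nonneg hp ω) t)
      (Real.rpow_nonneg (prod_map_nonneg (fun g => (ha0 g).le) ω) s)
  constructor <;> refine Finset.sum_le_sum fun ω hω => ?_ <;>
    rw [← pP_rpow_mul_aP_rpow_mul_abRatio_rpow ha0 hb0 hp]
  · calc _ = pP p ω ^ t * aP a ω ^ s * (min (b j₂ ^ (-θ)) 1 * abRatio a b ω ^ (-θ)) := by ring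
      _ ≤ _ := mul_le_mul_of_nonneg_left (hcut ω hω).1 (hF ω)
  · calc _ ≤ pP p ω ^ t * aP a ω ^ s * (max (b j₂ ^ (-θ)) 1 * abRatio a b ω ^ (-θ)) :=
          mul_le_mul_of_nonneg_left (hcut ω hω).2 (hF ω)
      _ = _ := by ring

end Growth

lemma exists_tendsto_log_Ups (hm : 0 < m) (hn : ∀ j, 1 ≤ n j) {a : Alph m n → ℝ}
    {b : Fin m → ℝ} (hab : ∀ g : Alph m n, 0 < a g ∧ a g < b g.1 ∧ b g.1 < 1)
    {p : Alph m n → ℝ} (hp : ∀ g, 0 < p g) (t : ℝ) :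
    ∃ Φ : ℝ → ℝ, (∀ s, 0 < Φ s) ∧ (∃! s, Φ s = 1) ∧
      ∀ s, Tendsto (fun N : ℕ => Real.log (Ups a b p N t s) / N) atTop (𝓝 (Real.log (Φ s))) := by
  have : Nonempty (Fin m) := ⟨⟨0, hm⟩⟩
  have : Nonempty (Alph m n) := ⟨⟨⟨0, hm⟩, ⟨0, hn _⟩⟩⟩
  have ha0 : ∀ g, 0 < a g := fun g => (hab g).1
  have hb0 : ∀ j, 0 < b j := fun j => (hab ⟨j, ⟨0, hn j⟩⟩).1.trans (hab ⟨j, ⟨0, hn j⟩⟩).2.1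
  have hb1 : ∀ j, b j < 1 := fun j => (hab ⟨j, ⟨0, hn j⟩⟩).2.2
  have hq : ∀ j, 0 < qf p j := fun j =>
    Finset.sum_pos (fun i _ => hp ⟨j, i⟩) ⟨⟨0, hn j⟩, Finset.mem_univ _⟩
  obtain ⟨θ, hθ, -⟩ := existsUnique_sum_mul_rpow_eq_one (fun j => Real.rpow_pos_of_pos (hq j) t)
    hb0 hb1
  have hc : ∀ g, 0 < p g ^ t * a g ^ (-θ) * b g.1 ^ θ := fun g =>
    mul_pos (mul_pos (Real.rpow_pos_of_pos (hp g) t) (Real.rpow_pos_of_pos (ha0 g) _))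
      (Real.rpow_pos_of_pos (hb0 g.1) θ)
  have hΦ : ∀ s : ℝ, 0 < ∑ g, p g ^ t * a g ^ (-θ) * b g.1 ^ θ * a g ^ s := fun s =>
    Finset.sum_pos (fun g _ => mul_pos (hc g) (Real.rpow_pos_of_pos (ha0 g) s))
      Finset.univ_nonempty
  obtain ⟨C₁, C₂, hC₁, hC₂, hUps⟩ := exists_Ups_mem_Icc ha0 (fun g => (hab g).2.1.le) hb0 hb1
    (fun g => (hp g).le) hθ
  exact ⟨_, hΦ, existsUnique_sum_mul_rpow_eq_one hc ha0 fun g => (hab g).2.1.trans (hab g).2.2,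
    fun s => tendsto_log_div_of_mem_Icc hC₁ hC₂ (hΦ s) fun N => hUps N s⟩

theorem stmt19_general
    (m : ℕ) (hm : 2 ≤ m) (n : Fin m → ℕ) (hn : ∀ j, 1 ≤ n j)
    (a : Alph m n → ℝ) (b : Fin m → ℝ)
    (hab : ∀ g : Alph m n, 0 < a g ∧ a g < b g.1 ∧ b g.1 < 1)
    (p : Alph m n → ℝ) (hp : ∀ g, 0 < p g) :
    (∀ t : ℝ, 0 ≤ t → ∀ s : ℝ,
      ∃ L : ℝ, Tendsto (fun N : ℕ => Real.log (Ups a b p N t s) / N) atTop (𝓝 L)) ∧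
    (∀ t : ℝ, 0 ≤ t →
      ∃! s : ℝ, Tendsto (fun N : ℕ => Real.log (Ups a b p N t s) / N) atTop (𝓝 0)) := by
  have key := exists_tendsto_log_Ups (by omega) hn hab hp
  refine ⟨fun t _ s => ?_, fun t _ => ?_⟩
  · obtain ⟨Φ, -, -, hlim⟩ := key t
    exact ⟨_, hlim s⟩
  · obtain ⟨Φ, hΦ, huniq, hlim⟩ := key t
    have hzero : ∀ s, Tendsto (fun N : ℕ => Real.log (Ups a b p N t s) / N) atTop (𝓝 0) ↔
        Φ s = 1 := fun s =>
      ⟨fun h => Real.eq_one_of_pos_of_log_eq_zero (hΦ s) (tendsto_nhds_unique (hlim s) h),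
        fun h => by simpa [h] using hlim s⟩
    simpa only [hzero] using huniq

theorem stmt19
    (m : ℕ) (hm : 2 ≤ m) (n : Fin m → ℕ) (hn : ∀ j, 1 ≤ n j)
    (a : Alph m n → ℝ) (b : Fin m → ℝ)
    (hab : ∀ g : Alph m n, 0 < a g ∧ a g < b g.1 ∧ b g.1 < 1)
    (p : Alph m n → ℝ) (hp : ∀ g, 0 < p g) (hp1 : ∑ g : Alph m n, p g = 1) :
    (∀ t : ℝ, 0 ≤ t → ∀ s : ℝ,
      ∃ L : ℝ, Tendsto (fun N : ℕ => Real.log (Ups a b p N t s) / N) atTop (𝓝 L)) ∧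
    (∀ t : ℝ, 0 ≤ t →
      ∃! s : ℝ, Tendsto (fun N : ℕ => Real.log (Ups a b p N t s) / N) atTop (𝓝 0)) :=
  stmt19_general m hm n hn a b hab p hp

end

end LGQ
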